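/- If A, B, C are iid discrete random variables on a finite set Ω with Pr{B ≠ A} > 0, then Pr{C = B | B ≠ A} ≤ Pr{C = B}. -/

import Mathlib

/-! Write `p x = Pr{A = x}` and `Sₖ = ∑ x, p x ^ k`. By independence `Pr{B = A} = Pr{C = B} = S₂`
and `Pr{A = B = C} = S₃`, so the claim reads `(S₂ - S₃) / (1 - S₂) ≤ S₂`, i.e. `S₂² ≤ S₃`. This is
Cauchy–Schwarz `(∑ p · p²)² ≤ (∑ p) (∑ p³)` with `∑ p = 1`; equivalently, `p(B)` has
nonnegative variance. -/

open MeasureTheory ProbabilityTheory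

open scoped ENNReal NNReal

lemma ENNReal.sq_sum_sq_le_sum_mul_sum_pow_three {ι : Type*} [Fintype ι] (p : ι → ℝ≥0∞)
    (hp : ∀ i, p i ≠ ∞) : (∑ i, p i ^ 2) ^ 2 ≤ (∑ i, p i) * ∑ i, p i ^ 3 := by
  lift p to ι → ℝ≥0 using hp
  have := Finset.sum_sq_le_sum_mul_sum_of_sq_le_mul Finset.univ
    (r := fun i => p i ^ (2 : ℕ)) (f := p) (g := fun i => p i ^ (3 : ℕ))
    (fun i _ => zero_le) (fun i _ => zero_le) (fun i _ => (by ring : _ = _).le)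
  dsimp only
  exact_mod_cast this

lemma ENNReal.sub_div_one_sub_le {s t : ℝ≥0∞} (hst : s ^ 2 ≤ t) (hs : s < 1) :
    (s - t) / (1 - s) ≤ s := by
  rw [ENNReal.div_le_iff (tsub_pos_of_lt hs).ne' (ENNReal.sub_ne_top ENNReal.one_ne_top),
    ENNReal.mul_sub fun _ _ => hs.ne_top, mul_one, ← sq]
  exact tsub_le_tsub_left hst s

namespace ProbabilityTheory

variable {Ω' Ω ι : Type*} [MeasurableSpace Ω'] {μ : Measure Ω'} [MeasurableSpace Ω]
  [MeasurableSingletonClass Ω] {X : ι → Ω' → Ω}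

lemma iIndepFun.measure_iUnion_iInter_preimage_singleton [Countable Ω] (hX : ∀ i, Measurable (X i))
    (hindep : iIndepFun X μ) {s : Finset ι} (hs : s.Nonempty) :
    μ (⋃ x, ⋂ i ∈ s, X i ⁻¹' {x}) = ∑' x, ∏ i ∈ s, μ (X i ⁻¹' {x}) := by
  obtain ⟨i₀, hi₀⟩ := hs
  rw [measure_iUnion]
  · simp_rw [hindep.measure_inter_preimage_eq_mul s fun i _ => measurableSet_singleton _]
  · intro x y hxy
    refine Set.disjoint_left.2 fun ω hx hy => hxy ?_
    simp only [Set.mem_iInter, Set.mem_preimage, Set.mem_singleton_iff] at hx hy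
    rw [← hx i₀ hi₀, hy i₀ hi₀]
  · exact fun x => Finset.measurableSet_biInter s fun i _ => hX i (measurableSet_singleton x)

lemma iIndepFun.measure_iUnion_iInter_preimage_singleton_of_identDistrib [Fintype Ω]
    (hX : ∀ i, Measurable (X i)) (hindep : iIndepFun X μ) {j : ι}
    (hident : ∀ i, IdentDistrib (X i) (X j) μ μ) {s : Finset ι} (hs : s.Nonempty) :
    μ (⋃ x, ⋂ i ∈ s, X i ⁻¹' {x}) = ∑ x, μ (X j ⁻¹' {x}) ^ s.card := by
  rw [hindep.measure_iUnion_iInter_preimage_singleton hX hs, tsum_fintype]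
  refine Finset.sum_congr rfl fun x _ => ?_
  rw [Finset.prod_congr rfl fun i _ => (hident i).measure_mem_eq (measurableSet_singleton x),
    Finset.prod_const]

end ProbabilityTheory

theorem conditional_match_le_match {Ω' : Type*} [MeasurableSpace Ω']
    (μ : Measure Ω') [IsProbabilityMeasure μ]
    {Ω : Type*} [Fintype Ω] [MeasurableSpace Ω] [MeasurableSingletonClass Ω]
    (X : Fin 3 → Ω' → Ω) (hmeas : ∀ i, Measurable (X i))
    (hindep : iIndepFun X μ)
    (hident : ∀ i j, IdentDistrib (X i) (X j) μ μ)
    (hpos : 0 < μ {ω | X 1 ω ≠ X 0 ω}) :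
    μ {ω | X 2 ω = X 1 ω ∧ X 1 ω ≠ X 0 ω} / μ {ω | X 1 ω ≠ X 0 ω} ≤
      μ {ω | X 2 ω = X 1 ω} := by
  set p : Ω → ℝ≥0∞ := fun x => μ (X 0 ⁻¹' {x})
  have hmatch (s : Finset (Fin 3)) (hs : s.Nonempty) :
      μ (⋃ x, ⋂ i ∈ s, X i ⁻¹' {x}) = ∑ x, p x ^ s.card :=
    hindep.measure_iUnion_iInter_preimage_singleton_of_identDistrib hmeas (hident · 0) hs
  have h10 : {ω | X 1 ω = X 0 ω} = ⋃ x, ⋂ i ∈ ({0, 1} : Finset (Fin 3)), X i ⁻¹' {x} := by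
    ext; simp [eq_comm]
  have h21 : {ω | X 2 ω = X 1 ω} = ⋃ x, ⋂ i ∈ ({1, 2} : Finset (Fin 3)), X i ⁻¹' {x} := by
    ext; simp [eq_comm]
  have h210 : {ω | X 2 ω = X 1 ω ∧ X 1 ω = X 0 ω} = ⋃ x, ⋂ i ∈ Finset.univ, X i ⁻¹' {x} := by
    ext; simp [Fin.forall_fin_succ]; grind
  have hmatch_meas : MeasurableSet {ω | X 1 ω = X 0 ω} := measurableSet_eq_fun (hmeas 1) (hmeas 0)
  have hp_sum : ∑ x, p x = 1 := by
    simp [p, sum_measure_preimage_singleton _ fun x _ => hmeas 0 (.singleton x)]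
  have hnum : μ {ω | X 2 ω = X 1 ω ∧ X 1 ω ≠ X 0 ω} =
      μ {ω | X 2 ω = X 1 ω} - μ {ω | X 2 ω = X 1 ω ∧ X 1 ω = X 0 ω} :=
    ENNReal.eq_sub_of_add_eq (measure_ne_top _ _)
      ((add_comm _ _).trans (measure_inter_add_sdiff _ hmatch_meas))
  have hden : μ {ω | X 1 ω ≠ X 0 ω} = 1 - μ {ω | X 1 ω = X 0 ω} :=
    prob_compl_eq_one_sub hmatch_meas
  rw [hden, h10, hmatch _ (by simp)] at hpos
  rw [hnum, hden, h21, h210, h10, hmatch _ (by simp), hmatch _ (by simp), hmatch _ (by simp)]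
  refine ENNReal.sub_div_one_sub_le ?_ (tsub_pos_iff_lt.1 hpos)
  simpa [hp_sum] using ENNReal.sq_sum_sq_le_sum_mul_sum_pow_three p fun x => measure_ne_top _ _
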